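/- Well membership criteria: (a) if ‖u‖_{1,a} < √(2r), then u belongs to the potential well 𝒲 = {u : J(u) < r, N(u) > 0} ∪ {0}; (b) conversely, if u ∈ 𝒲 then ‖u‖_{1,a} < √(2(p+1)r/(p-1)). -/

import Mathlib

open Finset Real

noncomputable section

/-- A finite weighted graph: positive vertex measure `mu`, symmetric nonnegative
edge weights `w` (an edge `x ∼ y` is present iff `0 < w x y`). -/
structure WGraph (V : Type*) [Fintype V] where
  mu : V → ℝ
  w : V → V → ℝ
  mu_pos : ∀ x, 0 < mu x
  w_symm : ∀ x y, w x y = w y x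
  w_nonneg : ∀ x y, 0 ≤ w x y

variable {V : Type*} [Fintype V]

/-- Integration on the graph: `∫_V f dμ = Σ_x μ(x) f(x)`. -/
def WGraph.integral (G : WGraph V) (f : V → ℝ) : ℝ := ∑ x, G.mu x * f x

/-- The μ-Laplacian: `Δu(x) = (1/μ(x)) Σ_y ω_{xy}(u(y)-u(x))`. -/
def WGraph.lap (G : WGraph V) (u : V → ℝ) (x : V) : ℝ :=
  (∑ y, G.w x y * (u y - u x)) / G.mu x

/-- Discrete Dirichlet pairing `∫_V ∇u∇v dμ = (1/2)Σ_xΣ_y ω_{xy}(u(y)-u(x))(v(y)-v(x))`. -/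
def WGraph.dirichlet (G : WGraph V) (u v : V → ℝ) : ℝ :=
  (1 / 2) * ∑ x, ∑ y, G.w x y * (u y - u x) * (v y - v x)

/-- Connectedness: any two vertices are joined by a finite chain of edges. -/
def WGraph.Connected (G : WGraph V) : Prop :=
  ∀ x y : V, Relation.ReflTransGen (fun a b => 0 < G.w a b) x y

/-- `‖u‖²_{1,a} = ∫_V (|∇u|² + a u²) dμ`. -/
def WGraph.norm1aSq (G : WGraph V) (a : V → ℝ) (u : V → ℝ) : ℝ :=
  G.dirichlet u u + G.integral (fun x => a x * u x ^ 2)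

/-- The first eigenvalue `λ_a` of `-Δ + a`, as the infimum of the Rayleigh quotient. -/
noncomputable def rayleighInf (G : WGraph V) (a : V → ℝ) : ℝ :=
  sInf {r : ℝ | ∃ u : V → ℝ, u ≠ 0 ∧
    r = G.norm1aSq a u / G.integral (fun x => u x ^ 2)}

/-- The energy functional `J(u) = (1/2)∫(|∇u|²+au²)dμ - (1/(p+1))∫|u|^{p+1}dμ`. -/
noncomputable def WGraph.J (G : WGraph V) (a : V → ℝ) (p : ℝ) (u : V → ℝ) : ℝ :=
  (1/2) * G.norm1aSq a u - (1/(p+1)) * G.integral (fun x => |u x| ^ (p+1))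

/-- The Nehari functional `N(u) = ∫(|∇u|²+au²)dμ - ∫|u|^{p+1}dμ`. -/
noncomputable def WGraph.nehari (G : WGraph V) (a : V → ℝ) (p : ℝ) (u : V → ℝ) : ℝ :=
  G.norm1aSq a u - G.integral (fun x => |u x| ^ (p+1))

/-- The Sobolev-type constant `Λ`. -/
noncomputable def sobolevInf (G : WGraph V) (a : V → ℝ) (p : ℝ) : ℝ :=
  sInf {r : ℝ | ∃ u : V → ℝ, u ≠ 0 ∧
    r = G.norm1aSq a u / (G.integral (fun x => |u x| ^ (p+1))) ^ (2/(p+1))}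

/-- The depth `r` of the potential well. -/
noncomputable def wellDepth (G : WGraph V) (a : V → ℝ) (p : ℝ) : ℝ :=
  sInf {r : ℝ | ∃ u : V → ℝ, u ≠ 0 ∧ G.nehari a p u = 0 ∧ r = G.J a p u}

/-!
On the Nehari manifold `N = 0` the energy equals `(p-1)/(2(p+1)) ‖u‖²_{1,a}`, so it suffices to
know that the well depth `r` is positive and that small functions cannot have `N ≤ 0`.
Positivity of `r` comes from finite dimensionality: `‖u‖²_{1,a}` is a positive definite
quadratic form, hence `≥ c ‖u‖²_∞`, while `∫ |u|^{p+1} ≤ μ(V) ‖u‖_∞^{p+1}`, and on the Nehari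
manifold the two sides coincide, which bounds `‖u‖_∞` from below. If `‖u‖²_{1,a} < 2r` but
`N(u) ≤ 0`, rescaling `u` by a factor `t ≤ 1` lands on the Nehari manifold with energy
`≤ (p-1)/(2(p+1)) ‖u‖²_{1,a} < r`, contradicting the definition of `r`.
-/

namespace WGraph

variable (G : WGraph V)

lemma integral_nonneg {f : V → ℝ} (hf : ∀ x, 0 ≤ f x) : 0 ≤ G.integral f :=
  Finset.sum_nonneg fun x _ => mul_nonneg (G.mu_pos x).le (hf x)

lemma integral_eq_zero_iff {f : V → ℝ} (hf : ∀ x, 0 ≤ f x) :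
    G.integral f = 0 ↔ ∀ x, f x = 0 := by
  rw [integral, Finset.sum_eq_zero_iff_of_nonneg fun x _ => mul_nonneg (G.mu_pos x).le (hf x)]
  simp [(G.mu_pos _).ne']

lemma integral_abs_rpow_pos (q : ℝ) {u : V → ℝ} (hu : u ≠ 0) :
    0 < G.integral fun x => |u x| ^ q := by
  obtain ⟨x₀, hx₀⟩ := Function.ne_iff.1 hu
  refine Finset.sum_pos' (fun x _ => mul_nonneg (G.mu_pos x).le (by positivity))
    ⟨x₀, mem_univ _, mul_pos (G.mu_pos x₀) (rpow_pos_of_pos (abs_pos.2 hx₀) _)⟩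

lemma integral_abs_rpow_le {q : ℝ} (hq : 0 ≤ q) (u : V → ℝ) :
    (G.integral fun x => |u x| ^ q) ≤ (∑ x, G.mu x) * ‖u‖ ^ q := by
  rw [integral, Finset.sum_mul]
  gcongr with x
  · exact (G.mu_pos x).le
  · simpa only [Real.norm_eq_abs] using norm_le_pi_norm u x

lemma integral_abs_rpow_smul {t : ℝ} (ht : 0 ≤ t) (q : ℝ) (u : V → ℝ) :
    (G.integral fun x => |(t • u) x| ^ q) = t ^ q * G.integral fun x => |u x| ^ q := by
  simp only [integral, Finset.mul_sum, Pi.smul_apply, smul_eq_mul, abs_mul, abs_of_nonneg ht,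
    mul_rpow ht (abs_nonneg _)]
  exact Finset.sum_congr rfl fun x _ => by ring

lemma w_mul_sub_mul_sub_nonneg (u : V → ℝ) (x y : V) :
    0 ≤ G.w x y * (u y - u x) * (u y - u x) := by
  rw [mul_assoc]
  exact mul_nonneg (G.w_nonneg x y) (mul_self_nonneg _)

lemma dirichlet_self_nonneg (u : V → ℝ) : 0 ≤ G.dirichlet u u :=
  mul_nonneg (by norm_num) <| Finset.sum_nonneg fun x _ =>
    Finset.sum_nonneg fun y _ => G.w_mul_sub_mul_sub_nonneg u x y

lemma eq_of_dirichlet_self_eq_zero {u : V → ℝ} (h : G.dirichlet u u = 0) {x y : V}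
    (hxy : 0 < G.w x y) : u y = u x := by
  have hsum : ∑ x, ∑ y, G.w x y * (u y - u x) * (u y - u x) = 0 := by
    simpa [dirichlet] using h
  rw [Finset.sum_eq_zero_iff_of_nonneg fun x _ =>
    Finset.sum_nonneg fun y _ => G.w_mul_sub_mul_sub_nonneg u x y] at hsum
  have hxy' := (Finset.sum_eq_zero_iff_of_nonneg fun y _ => G.w_mul_sub_mul_sub_nonneg u x y).1
    (hsum x (mem_univ x)) y (mem_univ y)
  rw [mul_assoc, mul_eq_zero, mul_self_eq_zero, sub_eq_zero] at hxy'
  exact hxy'.resolve_left hxy.ne'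

lemma Connected.eq_of_dirichlet_self_eq_zero {G : WGraph V} (hconn : G.Connected)
    {u : V → ℝ} (h : G.dirichlet u u = 0) (x y : V) : u x = u y := by
  induction hconn x y with
  | refl => rfl
  | tail _ hbc ih => rw [ih, G.eq_of_dirichlet_self_eq_zero h hbc]

lemma dirichlet_smul (t : ℝ) (u : V → ℝ) :
    G.dirichlet (t • u) (t • u) = t ^ 2 * G.dirichlet u u := by
  simp only [dirichlet, Pi.smul_apply, smul_eq_mul, Finset.mul_sum]
  exact Finset.sum_congr rfl fun x _ => Finset.sum_congr rfl fun y _ => by ring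

variable {a : V → ℝ}

lemma norm1aSq_nonneg (ha : ∀ x, 0 ≤ a x) (u : V → ℝ) : 0 ≤ G.norm1aSq a u :=
  add_nonneg (G.dirichlet_self_nonneg u) (G.integral_nonneg fun x => by have := ha x; positivity)

lemma norm1aSq_pos (hconn : G.Connected) (ha : ∀ x, 0 ≤ a x) (ha0 : a ≠ 0) {u : V → ℝ}
    (hu : u ≠ 0) : 0 < G.norm1aSq a u := by
  refine (G.norm1aSq_nonneg ha u).lt_of_ne' fun h => hu ?_
  have hpot : ∀ x, 0 ≤ a x * u x ^ 2 := fun x => by have := ha x; positivity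
  have hD := G.dirichlet_self_nonneg u
  have hI := G.integral_nonneg hpot
  have hD0 : G.dirichlet u u = 0 := by unfold norm1aSq at h; linarith
  have hI0 := (G.integral_eq_zero_iff hpot).1 (by unfold norm1aSq at h; linarith)
  obtain ⟨x₀, hx₀⟩ := Function.ne_iff.1 ha0
  have hux₀ : u x₀ = 0 :=
    (pow_eq_zero_iff two_ne_zero).1 ((mul_eq_zero.1 (hI0 x₀)).resolve_left hx₀)
  funext x
  rw [hconn.eq_of_dirichlet_self_eq_zero hD0 x x₀, hux₀, Pi.zero_apply]

lemma norm1aSq_smul (t : ℝ) (u : V → ℝ) : G.norm1aSq a (t • u) = t ^ 2 * G.norm1aSq a u := by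
  rw [norm1aSq, norm1aSq, dirichlet_smul, mul_add, integral, integral, Finset.mul_sum]
  refine congrArg _ <| Finset.sum_congr rfl fun x _ => ?_
  simp only [Pi.smul_apply, smul_eq_mul]
  ring

lemma continuous_norm1aSq (a : V → ℝ) : Continuous (G.norm1aSq a) := by
  unfold norm1aSq dirichlet integral
  fun_prop

lemma exists_pos_mul_norm_sq_le_norm1aSq [Nonempty V] (hconn : G.Connected)
    (ha : ∀ x, 0 ≤ a x) (ha0 : a ≠ 0) : ∃ c > 0, ∀ u, c * ‖u‖ ^ 2 ≤ G.norm1aSq a u := by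
  obtain ⟨u₀, hu₀, hmin⟩ := (isCompact_sphere (0 : V → ℝ) 1).exists_isMinOn
    (NormedSpace.sphere_nonempty.2 zero_le_one) (G.continuous_norm1aSq a).continuousOn
  refine ⟨G.norm1aSq a u₀, G.norm1aSq_pos hconn ha ha0 (ne_zero_of_mem_unit_sphere ⟨u₀, hu₀⟩),
    fun u => ?_⟩
  rcases eq_or_ne u 0 with rfl | hu
  · simpa using G.norm1aSq_nonneg ha 0
  have hu' : ‖u‖⁻¹ • u ∈ Metric.sphere (0 : V → ℝ) 1 := by
    rw [mem_sphere_zero_iff_norm, norm_smul, norm_inv, norm_norm, inv_mul_cancel₀ (by simpa)]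
  calc G.norm1aSq a u₀ * ‖u‖ ^ 2 ≤ G.norm1aSq a (‖u‖⁻¹ • u) * ‖u‖ ^ 2 := by
        gcongr; exact hmin hu'
    _ = G.norm1aSq a u := by
        rw [norm1aSq_smul, inv_pow]
        field_simp

variable {p : ℝ}

lemma nehari_smul {t : ℝ} (ht : 0 ≤ t) (u : V → ℝ) :
    G.nehari a p (t • u) =
      t ^ 2 * G.norm1aSq a u - t ^ (p + 1) * G.integral fun x => |u x| ^ (p + 1) := by
  rw [nehari, norm1aSq_smul, integral_abs_rpow_smul G ht]

lemma nehari_smul_eq_zero (hp : p ≠ 1) {u : V → ℝ} (hA : 0 < G.norm1aSq a u)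
    (hB : 0 < G.integral fun x => |u x| ^ (p + 1)) :
    G.nehari a p
      (((G.norm1aSq a u / G.integral fun x => |u x| ^ (p + 1)) ^ (p - 1)⁻¹) • u) = 0 := by
  set t := (G.norm1aSq a u / G.integral fun x => |u x| ^ (p + 1)) ^ (p - 1)⁻¹ with ht
  have ht0 : 0 < t := rpow_pos_of_pos (div_pos hA hB) _
  have htp : t ^ (p + 1) = t ^ 2 * (G.norm1aSq a u / G.integral fun x => |u x| ^ (p + 1)) := by
    calc t ^ (p + 1) = t ^ ((2 : ℝ) + (p - 1)) := by ring_nf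
      _ = _ := by
        rw [rpow_add ht0, rpow_two, ht, ← rpow_mul (div_pos hA hB).le,
          inv_mul_cancel₀ (sub_ne_zero.2 hp), rpow_one]
  rw [G.nehari_smul ht0.le, htp]
  field_simp
  ring

lemma J_eq_of_nehari_eq_zero (hp : p ≠ -1) {u : V → ℝ} (hN : G.nehari a p u = 0) :
    G.J a p u = (p - 1) / (2 * (p + 1)) * G.norm1aSq a u := by
  have hB : (G.integral fun x => |u x| ^ (p + 1)) = G.norm1aSq a u := by
    unfold nehari at hN; linarith
  have hp' : p + 1 ≠ 0 := fun h => hp (by linarith)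
  rw [J, hB]
  field_simp
  ring

lemma J_le_half_norm1aSq (hp : -1 ≤ p) (u : V → ℝ) : G.J a p u ≤ 1 / 2 * G.norm1aSq a u := by
  have : 0 ≤ 1 / (p + 1) * G.integral fun x => |u x| ^ (p + 1) :=
    mul_nonneg (one_div_nonneg.2 (by linarith)) (G.integral_nonneg fun x => by positivity)
  rw [J]
  linarith

lemma mul_norm1aSq_lt_J_of_nehari_pos (hp : -1 < p) {u : V → ℝ} (hN : 0 < G.nehari a p u) :
    (p - 1) / (2 * (p + 1)) * G.norm1aSq a u < G.J a p u := by
  have hp' : 0 < p + 1 := by linarith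
  have hB : (G.integral fun x => |u x| ^ (p + 1)) < G.norm1aSq a u := by
    unfold nehari at hN; linarith
  have hk : (p - 1) / (2 * (p + 1)) * G.norm1aSq a u
      = 1 / 2 * G.norm1aSq a u - 1 / (p + 1) * G.norm1aSq a u := by
    field_simp; ring
  rw [J, hk]
  linarith [mul_lt_mul_of_pos_left hB (one_div_pos.2 hp')]

end WGraph

open WGraph

section WellDepth

variable (G : WGraph V) {a : V → ℝ} {p : ℝ}

lemma wellDepth_le_J (hp : 1 ≤ p) (ha : ∀ x, 0 ≤ a x) {v : V → ℝ} (hv : v ≠ 0)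
    (hN : G.nehari a p v = 0) : wellDepth G a p ≤ G.J a p v := by
  refine csInf_le ⟨0, ?_⟩ ⟨v, hv, hN, rfl⟩
  rintro _ ⟨w, -, hw, rfl⟩
  rw [G.J_eq_of_nehari_eq_zero (by linarith) hw]
  exact mul_nonneg (div_nonneg (by linarith) (by linarith)) (G.norm1aSq_nonneg ha w)

lemma exists_ne_zero_nehari_eq_zero [Nonempty V] (hconn : G.Connected) (hp : p ≠ 1)
    (ha : ∀ x, 0 ≤ a x) (ha0 : a ≠ 0) : ∃ v : V → ℝ, v ≠ 0 ∧ G.nehari a p v = 0 := by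
  have hA := G.norm1aSq_pos hconn ha ha0 (one_ne_zero (α := V → ℝ))
  have hB := G.integral_abs_rpow_pos (p + 1) (one_ne_zero (α := V → ℝ))
  exact ⟨_, smul_ne_zero (rpow_pos_of_pos (div_pos hA hB) _).ne' one_ne_zero,
    G.nehari_smul_eq_zero hp hA hB⟩

lemma rpow_le_norm_of_nehari_eq_zero (hp : 1 < p) {c : ℝ} (hc0 : 0 < c)
    (hc : ∀ u, c * ‖u‖ ^ 2 ≤ G.norm1aSq a u) {v : V → ℝ} (hv : v ≠ 0)
    (hN : G.nehari a p v = 0) : (c / ∑ x, G.mu x) ^ (p - 1)⁻¹ ≤ ‖v‖ := by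
  have hM : 0 < ∑ x, G.mu x := by
    obtain ⟨x₀, -⟩ := Function.ne_iff.1 hv
    exact Finset.sum_pos (fun x _ => G.mu_pos x) ⟨x₀, mem_univ x₀⟩
  have hv2 : 0 < ‖v‖ ^ 2 := by positivity
  have hB : (G.integral fun x => |v x| ^ (p + 1)) = G.norm1aSq a v := by
    unfold nehari at hN; linarith
  have key : c * ‖v‖ ^ 2 ≤ (∑ x, G.mu x) * ‖v‖ ^ (p - 1) * ‖v‖ ^ 2 := by
    calc c * ‖v‖ ^ 2 ≤ G.integral fun x => |v x| ^ (p + 1) := hB ▸ hc v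
      _ ≤ (∑ x, G.mu x) * ‖v‖ ^ (p + 1) := G.integral_abs_rpow_le (by linarith) v
      _ = (∑ x, G.mu x) * ‖v‖ ^ (p - 1) * ‖v‖ ^ 2 := by
        rw [show p + 1 = (p - 1) + 2 by ring, rpow_add (norm_pos_iff.2 hv), rpow_two, mul_assoc]
  rw [rpow_inv_le_iff_of_pos (by positivity) (norm_nonneg v) (by linarith), div_le_iff₀ hM,
    mul_comm]
  exact le_of_mul_le_mul_right key hv2

lemma wellDepth_pos [Nonempty V] (hconn : G.Connected) (hp : 1 < p) (ha : ∀ x, 0 ≤ a x)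
    (ha0 : a ≠ 0) : 0 < wellDepth G a p := by
  obtain ⟨c, hc0, hc⟩ := G.exists_pos_mul_norm_sq_le_norm1aSq hconn ha ha0
  obtain ⟨v₀, hv₀, hN₀⟩ := exists_ne_zero_nehari_eq_zero G hconn hp.ne' ha ha0
  set ρ := (c / ∑ x, G.mu x) ^ (p - 1)⁻¹
  have hρ : 0 < ρ :=
    rpow_pos_of_pos (div_pos hc0 (Finset.sum_pos (fun x _ => G.mu_pos x) univ_nonempty)) _
  have hk : 0 < (p - 1) / (2 * (p + 1)) := div_pos (by linarith) (by linarith)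
  refine (by positivity : 0 < (p - 1) / (2 * (p + 1)) * (c * ρ ^ 2)).trans_le
    (le_csInf ⟨_, v₀, hv₀, hN₀, rfl⟩ ?_)
  rintro _ ⟨v, hv, hN, rfl⟩
  rw [G.J_eq_of_nehari_eq_zero (by linarith) hN]
  gcongr
  exact (mul_le_mul_of_nonneg_left (pow_le_pow_left₀ hρ.le
    (rpow_le_norm_of_nehari_eq_zero G hp hc0 hc hv hN) 2) hc0.le).trans (hc v)

lemma nehari_pos_of_norm1aSq_lt (hconn : G.Connected) (hp : 1 < p) (ha : ∀ x, 0 ≤ a x)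
    (ha0 : a ≠ 0) {u : V → ℝ} (hu : u ≠ 0) (hlt : G.norm1aSq a u < 2 * wellDepth G a p) :
    0 < G.nehari a p u := by
  by_contra! hN
  have hA := G.norm1aSq_pos hconn ha ha0 hu
  have hB := G.integral_abs_rpow_pos (p + 1) hu
  have hAB : G.norm1aSq a u ≤ G.integral fun x => |u x| ^ (p + 1) := by
    unfold nehari at hN; linarith
  set t := (G.norm1aSq a u / G.integral fun x => |u x| ^ (p + 1)) ^ (p - 1)⁻¹
  have ht : 0 < t := rpow_pos_of_pos (div_pos hA hB) _
  have ht1 : t ≤ 1 :=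
    rpow_le_one (div_pos hA hB).le ((div_le_one hB).2 hAB) (inv_nonneg.2 (by linarith))
  have hNt := G.nehari_smul_eq_zero hp.ne' hA hB
  have hk0 : 0 ≤ (p - 1) / (2 * (p + 1)) := div_nonneg (by linarith) (by linarith)
  have hk : (p - 1) / (2 * (p + 1)) < 1 / 2 := by
    rw [div_lt_iff₀ (by linarith)]; linarith
  refine lt_irrefl (wellDepth G a p) ?_
  calc wellDepth G a p ≤ G.J a p (t • u) :=
        wellDepth_le_J G hp.le ha (smul_ne_zero ht.ne' hu) hNt
    _ = (p - 1) / (2 * (p + 1)) * (t ^ 2 * G.norm1aSq a u) := by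
      rw [G.J_eq_of_nehari_eq_zero (by linarith) hNt, norm1aSq_smul]
    _ ≤ (p - 1) / (2 * (p + 1)) * G.norm1aSq a u := by
      gcongr
      exact mul_le_of_le_one_left hA.le (pow_le_one₀ ht.le ht1)
    _ < 1 / 2 * G.norm1aSq a u := by gcongr
    _ < wellDepth G a p := by linarith

end WellDepth

/-- membership criteria for the potential well
`𝒲 = {u : J(u) < r, N(u) > 0} ∪ {0}`. -/
theorem well_membership {V : Type*} [Fintype V] [Nonempty V]
    (G : WGraph V) (hconn : G.Connected) (p : ℝ) (hp : 1 < p)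
    (a : V → ℝ) (ha : ∀ x, 0 ≤ a x) (ha0 : a ≠ 0) :
    (∀ u : V → ℝ,
      Real.sqrt (G.norm1aSq a u) < Real.sqrt (2 * wellDepth G a p) →
      (G.J a p u < wellDepth G a p ∧ 0 < G.nehari a p u) ∨ u = 0) ∧
    (∀ u : V → ℝ,
      (G.J a p u < wellDepth G a p ∧ 0 < G.nehari a p u) ∨ u = 0 →
      Real.sqrt (G.norm1aSq a u) <
        Real.sqrt (2 * (p + 1) * wellDepth G a p / (p - 1))) := by
  have hr := wellDepth_pos G hconn hp ha ha0
  refine ⟨fun u hu => ?_, fun u hu => ?_⟩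
  · rcases eq_or_ne u 0 with h0 | h0
    · exact Or.inr h0
    have hA := (sqrt_lt_sqrt_iff (G.norm1aSq_nonneg ha u)).1 hu
    exact Or.inl ⟨(G.J_le_half_norm1aSq (by linarith) u).trans_lt (by linarith),
      nehari_pos_of_norm1aSq_lt G hconn hp ha ha0 h0 hA⟩
  · refine sqrt_lt_sqrt (G.norm1aSq_nonneg ha u) ?_
    rw [lt_div_iff₀ (by linarith)]
    rcases hu with ⟨hJ, hN⟩ | rfl
    · have hk := (G.mul_norm1aSq_lt_J_of_nehari_pos (by linarith) hN).trans hJ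
      rw [div_mul_eq_mul_div, div_lt_iff₀ (by linarith)] at hk
      linarith
    · have h0 : G.norm1aSq a 0 = 0 := by simpa using G.norm1aSq_smul (a := a) 0 0
      rw [h0, zero_mul]
      exact mul_pos (by linarith) hr
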